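/- Let n and m be coprime positive integers and let a be a positive integer. Let P ∈ ℂ[x, y] be a polynomial that is monic in y of degree a·n and quasi-homogeneous of weighted degree a·n·m for the weights w(x) = n, w(y) = m, i.e. every monomial x^i·y^j occurring in P with nonzero coefficient satisfies n·i + m·j = a·n·m. Then there exist pairwise distinct complex numbers C_1, …, C_s and positive integers k_1, …, k_s with k_1 + ⋯ + k_s = a such that P = ∏_{j=1}^{s} (y^n − C_j·x^m)^{k_j}. -/

import Mathlib

/-!
Setting `x = 1` loses no information on a quasi-homogeneous polynomial: as `n > 0`, the weight
condition fixes the `x`-degree of each coefficient of `y ^ j`, which is therefore a monomial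
determined by its value at `x = 1`. The dehomogenization `Q(y) = P(1, y)` is monic of degree
`a * n`, and since `n` and `m` are coprime its nonzero coefficients sit at multiples of `n`, so
`Q(y) = f(y ^ n)` with `f` monic of degree `a`. Factoring `f = ∏ (y - C_j) ^ k_j` over `ℂ`, the
polynomial `∏ (y ^ n - C_j x ^ m) ^ k_j` is quasi-homogeneous of the same weighted degree and
also dehomogenizes to `Q`, hence equals `P`.
-/

open Polynomial

theorem Polynomial.expand_contract_of_coeff_eq_zero {R : Type*} [CommSemiring R] {p : ℕ}
    (hp : p ≠ 0) {f : R[X]} (hf : ∀ j, ¬ p ∣ j → f.coeff j = 0) :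
    expand R p (contract p f) = f := by
  ext j
  rw [coeff_expand hp.bot_lt]
  split_ifs with hj
  · rw [coeff_contract hp, Nat.div_mul_cancel hj]
  · exact (hf j hj).symm

theorem Polynomial.Monic.prod_X_sub_C_pow_count_roots {K : Type*} [Field K] [IsAlgClosed K]
    [DecidableEq K] {f : K[X]} (hf : f.Monic) :
    ∏ r ∈ f.roots.toFinset, (X - C r) ^ f.roots.count r = f := by
  rw [← Finset.prod_multiset_map_count]
  exact ((IsAlgClosed.splits f).eq_prod_roots_of_monic hf).symm

theorem Polynomial.sum_count_roots_eq_natDegree {K : Type*} [Field K] [IsAlgClosed K]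
    [DecidableEq K] (f : K[X]) : ∑ r ∈ f.roots.toFinset, f.roots.count r = f.natDegree := by
  rw [Multiset.toFinset_sum_count_eq]
  exact (splits_iff_card_roots.mp (IsAlgClosed.splits f))

/-- `p.coeff j` is the coefficient of `y ^ j`, a polynomial in `x`. -/
def IsQuasiHomogeneous {R : Type*} [Semiring R] (n m d : ℕ) (p : R[X][X]) : Prop :=
  ∀ i j : ℕ, (p.coeff j).coeff i ≠ 0 → n * i + m * j = d

namespace IsQuasiHomogeneous

variable {R : Type*} {n m : ℕ}

section CommSemiring

variable [CommSemiring R]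

theorem one : IsQuasiHomogeneous n m 0 (1 : R[X][X]) := by
  intro i j h
  rcases eq_or_ne j 0 with rfl | hj
  · rcases eq_or_ne i 0 with rfl | hi
    · rfl
    · simp [coeff_one, hi] at h
  · simp [coeff_one, hj] at h

theorem mul {d₁ d₂ : ℕ} {p q : R[X][X]} (hp : IsQuasiHomogeneous n m d₁ p)
    (hq : IsQuasiHomogeneous n m d₂ q) : IsQuasiHomogeneous n m (d₁ + d₂) (p * q) := by
  intro i j h
  rw [coeff_mul, finsetSum_coeff] at h
  obtain ⟨⟨j₁, j₂⟩, hj, hj_ne⟩ := Finset.exists_ne_zero_of_sum_ne_zero h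
  rw [coeff_mul] at hj_ne
  obtain ⟨⟨i₁, i₂⟩, hi, hi_ne⟩ := Finset.exists_ne_zero_of_sum_ne_zero hj_ne
  rw [Finset.HasAntidiagonal.mem_antidiagonal] at hi hj
  have h₁ := hp i₁ j₁ (left_ne_zero_of_mul hi_ne)
  have h₂ := hq i₂ j₂ (right_ne_zero_of_mul hi_ne)
  subst hi hj
  linear_combination h₁ + h₂

theorem pow {d : ℕ} {p : R[X][X]} (hp : IsQuasiHomogeneous n m d p) (k : ℕ) :
    IsQuasiHomogeneous n m (d * k) (p ^ k) := by
  induction k with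
  | zero => simpa using one
  | succ k ih => simpa only [pow_succ, mul_add, mul_one] using ih.mul hp

theorem prod {ι : Type*} (t : Finset ι) {d : ι → ℕ} {f : ι → R[X][X]}
    (h : ∀ x ∈ t, IsQuasiHomogeneous n m (d x) (f x)) :
    IsQuasiHomogeneous n m (∑ x ∈ t, d x) (∏ x ∈ t, f x) := by
  induction t using Finset.cons_induction with
  | empty => simpa using one
  | cons x t _ ih =>
    rw [Finset.prod_cons, Finset.sum_cons]
    exact (h x (t.mem_cons_self x)).mul (ih fun y hy => h y (Finset.mem_cons_of_mem hy))

theorem coeff_coeff_eq (hn : 0 < n) {d : ℕ} {p : R[X][X]} (hp : IsQuasiHomogeneous n m d p)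
    (i j : ℕ) :
    (p.coeff j).coeff i = if n * i + m * j = d then (p.coeff j).eval 1 else 0 := by
  split_ifs with hij
  · rw [eval_eq_sum_range, Finset.sum_eq_single i]
    · simp
    · intro i' _ hi'
      by_contra h
      exact hi' (Nat.eq_of_mul_eq_mul_left hn (by linarith [hp i' j (by simpa using h)]))
    · intro hi
      simp [coeff_eq_zero_of_natDegree_lt (by simpa [Nat.lt_succ_iff] using hi)]
  · exact not_not.mp fun h => hij (hp i j h)

theorem ext_of_map_eval_one (hn : 0 < n) {d : ℕ} {p q : R[X][X]}
    (hp : IsQuasiHomogeneous n m d p) (hq : IsQuasiHomogeneous n m d q)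
    (h : p.map (evalRingHom 1) = q.map (evalRingHom 1)) : p = q := by
  ext j i
  have hj := congrArg (coeff · j) h
  simp only [coeff_map, coe_evalRingHom] at hj
  rw [hp.coeff_coeff_eq hn, hq.coeff_coeff_eq hn, hj]

theorem coeff_map_eval_one_eq_zero {d : ℕ} {p : R[X][X]} (hp : IsQuasiHomogeneous n m d p)
    (hcop : n.Coprime m) (hd : n ∣ d) {j : ℕ} (hj : ¬ n ∣ j) :
    (p.map (evalRingHom 1)).coeff j = 0 := by
  suffices p.coeff j = 0 by rw [coeff_map, this, map_zero]
  ext i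
  by_contra h
  have hmj : n ∣ m * j := by
    rw [← Nat.dvd_add_right (dvd_mul_right n i), hp i j h]
    exact hd
  exact hj (hcop.dvd_of_dvd_mul_left hmj)

theorem exists_map_eval_one_eq_expand [Nontrivial R] (hn : 0 < n)
    (hcop : n.Coprime m) {d : ℕ} (hd : n ∣ d) {P : R[X][X]} (hP : IsQuasiHomogeneous n m d P)
    (hmonic : P.Monic) :
    ∃ f : R[X], f.Monic ∧ f.natDegree * n = P.natDegree ∧
      P.map (evalRingHom 1) = expand R n f := by
  have hexpand := expand_contract_of_coeff_eq_zero hn.ne' fun j hj =>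
    hP.coeff_map_eval_one_eq_zero hcop hd hj
  refine ⟨_, (monic_expand_iff hn).mp (by rw [hexpand]; exact hmonic.map _), ?_, hexpand.symm⟩
  rw [← natDegree_expand, hexpand, hmonic.natDegree_map]

end CommSemiring

theorem X_pow_sub_C [CommRing R] (c : R) :
    IsQuasiHomogeneous n m (n * m) (X ^ n - C (C c * X ^ m) : R[X][X]) := by
  intro i j h
  rw [coeff_sub, coeff_X_pow, coeff_C] at h
  split_ifs at h with hjn hj0 hj0
  · subst hjn hj0; simp
  · subst hjn
    rcases eq_or_ne i 0 with rfl | hi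
    · ring
    · simp [coeff_one, hi] at h
  · subst hj0
    rcases eq_or_ne i m with rfl | hi
    · ring
    · simp [coeff_X_pow, hi] at h
  · simp at h

theorem eq_prod_of_map_eval_one_eq_expand {K : Type*} [Field K] [IsAlgClosed K] [DecidableEq K]
    (hn : 0 < n) {P : K[X][X]} {f : K[X]} (hf : f.Monic)
    (hP : IsQuasiHomogeneous n m (n * m * f.natDegree) P)
    (h : P.map (evalRingHom 1) = expand K n f) :
    P = ∏ r ∈ f.roots.toFinset, (X ^ n - C (C r * X ^ m)) ^ f.roots.count r := by
  have hprod := prod f.roots.toFinset fun r _ => (X_pow_sub_C (n := n) (m := m) r).pow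
    (f.roots.count r)
  rw [← Finset.mul_sum, sum_count_roots_eq_natDegree] at hprod
  refine hP.ext_of_map_eval_one hn hprod ?_
  calc P.map (evalRingHom 1)
      = expand K n (∏ r ∈ f.roots.toFinset, (X - C r) ^ f.roots.count r) := by
        rw [hf.prod_X_sub_C_pow_count_roots, h]
    _ = _ := by simp [Polynomial.map_prod]

end IsQuasiHomogeneous

theorem quasi_homogeneous_factorization
    (n m a : ℕ) (hn : 0 < n)
    (hcop : Nat.Coprime n m)
    (P : Polynomial (Polynomial ℂ))
    (hmonic : P.Monic) (hdeg : P.natDegree = a * n)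
    (hqh : ∀ i j : ℕ, (P.coeff j).coeff i ≠ 0 → n * i + m * j = a * n * m) :
    ∃ (s : ℕ) (C : Fin s → ℂ) (k : Fin s → ℕ),
      Function.Injective C ∧ (∀ j, 0 < k j) ∧ (∑ j, k j) = a ∧
      P = ∏ j, (Polynomial.X ^ n -
        Polynomial.C (Polynomial.C (C j) * Polynomial.X ^ m)) ^ k j := by
  classical
  obtain ⟨f, hf, hf_deg, hPf⟩ :=
    IsQuasiHomogeneous.exists_map_eval_one_eq_expand hn hcop ⟨a * m, by ring⟩ hqh hmonic
  have hfa : f.natDegree = a := Nat.eq_of_mul_eq_mul_right hn (hf_deg.trans hdeg)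
  have hqh' : IsQuasiHomogeneous n m (n * m * f.natDegree) P := by
    rw [hfa, show n * m * a = a * n * m by ring]
    exact hqh
  have hP := hqh'.eq_prod_of_map_eval_one_eq_expand hn hf hPf
  set t := f.roots.toFinset
  let e := t.equivFin.symm
  refine ⟨t.card, fun j => e j, fun j => f.roots.count (e j : ℂ),
    Subtype.val_injective.comp e.injective,
    fun j => Multiset.count_pos.mpr (Multiset.mem_toFinset.mp (e j).2), ?_, ?_⟩
  · rw [← hfa, ← sum_count_roots_eq_natDegree, ← t.sum_coe_sort]
    exact e.sum_comp (fun r : t => f.roots.count (r : ℂ))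
  · rw [hP, ← t.prod_coe_sort]
    exact (e.prod_comp fun r : t =>
      (X ^ n - C (C (r : ℂ) * X ^ m)) ^ f.roots.count (r : ℂ)).symm
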